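/- arXiv:quant-ph/0204092 — 3 statements merged into one kernel-verified Lean document; each statement's English description precedes it below -/
import Mathlib

section
/- If ρ_{AA'} is a density operator on A⊗A' with dim A' = d and ρ_A = Tr_{A'} ρ_{AA'}, then Δ(ρ_A) ≤ Δ(ρ_{AA'}) + 2 log d, where Δ(ρ) = S_0(ρ) - S_∞(ρ). -/
/-!
The partial trace is the sum of the `d` diagonal blocks `ρ.submatrix (·, x) (·, x)` of `ρ`.
Subadditivity of rank then gives `rank (ptrace ρ) ≤ d · rank ρ`, and since each block of a
positive semidefinite matrix is positive semidefinite, `ptrace` is monotone for the Loewner order: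
from `ρ ≤ λ_max(ρ) • 1` we get `ptrace ρ ≤ d λ_max(ρ) • 1`, i.e.
`λ_max(ptrace ρ) ≤ d λ_max(ρ)`.
Taking `log₂` of both bounds and adding gives the claim; `trace ρ = 1` keeps every argument
of `log₂` positive, where it is monotone.
-/

open ComplexOrder

/-- Partial trace over the second factor. -/
noncomputable def ptrace {A A' : Type*} [Fintype A'] (ρ : Matrix (A × A') (A × A') ℂ) :
    Matrix A A ℂ :=
  fun a b => ∑ x : A', ρ (a, x) (b, x)

open Matrix MatrixOrder

namespace Matrix

theorem rank_finsetSum_le {K m n ι : Type*} [Field K] [Fintype n] (s : Finset ι)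
    (f : ι → Matrix m n K) : (∑ i ∈ s, f i).rank ≤ ∑ i ∈ s, (f i).rank := by
  classical
  have h := LinearMap.rank_finsetSum_le s fun i => toLin' (f i)
  rw [← map_sum] at h
  simp only [LinearMap.rank, ← Module.finrank_eq_rank] at h
  simp only [rank, ← toLin'_apply']
  exact_mod_cast h

namespace IsHermitian

variable {𝕜 n : Type*} [RCLike 𝕜] [Fintype n] [DecidableEq n] {M : Matrix n n 𝕜}
  (hM : M.IsHermitian)
include hM

theorem le_algebraMap_iff_eigenvalues_le (r : ℝ) :
    M ≤ algebraMap ℝ _ r ↔ ∀ i, hM.eigenvalues i ≤ r := by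
  rw [le_algebraMap_iff_spectrum_le hM.isSelfAdjoint, hM.spectrum_real_eq_range_eigenvalues]
  simp

theorem eigenvalues_le_iSup (i : n) : hM.eigenvalues i ≤ ⨆ j, hM.eigenvalues j :=
  le_ciSup (Set.finite_range _).bddAbove i

theorem exists_eigenvalues_pos (h : 0 < RCLike.re M.trace) : ∃ i, 0 < hM.eigenvalues i := by
  contrapose! h
  rw [hM.trace_eq_sum_eigenvalues, map_sum]
  simpa using Finset.sum_nonpos fun i _ => h i

theorem rank_pos (h : 0 < RCLike.re M.trace) : 0 < M.rank := by
  obtain ⟨i, hi⟩ := hM.exists_eigenvalues_pos h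
  rw [hM.rank_eq_card_non_zero_eigs]
  exact Fintype.card_pos_iff.mpr ⟨⟨i, hi.ne'⟩⟩

theorem iSup_eigenvalues_pos (h : 0 < RCLike.re M.trace) : 0 < ⨆ i, hM.eigenvalues i := by
  obtain ⟨i, hi⟩ := hM.exists_eigenvalues_pos h
  exact hi.trans_le (hM.eigenvalues_le_iSup i)

end IsHermitian

end Matrix

section PartialTrace

variable {A A' : Type*} [Fintype A']

theorem ptrace_eq_sum_submatrix (ρ : Matrix (A × A') (A × A') ℂ) :
    ptrace ρ = ∑ x : A', ρ.submatrix (·, x) (·, x) := by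
  ext a b
  simp [ptrace, Matrix.sum_apply]

theorem ptrace_sub (ρ σ : Matrix (A × A') (A × A') ℂ) :
    ptrace (ρ - σ) = ptrace ρ - ptrace σ := by
  ext a b
  simp [ptrace, Finset.sum_sub_distrib]

theorem ptrace_algebraMap [Fintype A] [DecidableEq A] [DecidableEq A'] (r : ℝ) :
    ptrace (algebraMap ℝ (Matrix (A × A') (A × A') ℂ) r) =
      algebraMap ℝ (Matrix A A ℂ) (Fintype.card A' * r) := by
  ext a b
  by_cases hab : a = b <;> simp [ptrace, algebraMap_eq_diagonal, hab]

theorem trace_ptrace [Fintype A] (ρ : Matrix (A × A') (A × A') ℂ) :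
    (ptrace ρ).trace = ρ.trace := by
  simp [trace, ptrace, Fintype.sum_prod_type]

theorem rank_ptrace_le [Fintype A] (ρ : Matrix (A × A') (A × A') ℂ) :
    (ptrace ρ).rank ≤ Fintype.card A' * ρ.rank := by
  rw [ptrace_eq_sum_submatrix]
  refine (rank_finsetSum_le _ _).trans ?_
  calc _ ≤ ∑ _x : A', ρ.rank := Finset.sum_le_sum fun x _ => rank_submatrix_le ρ _ _
    _ = Fintype.card A' * ρ.rank := by rw [Finset.sum_const, smul_eq_mul, Finset.card_univ]

theorem Matrix.PosSemidef.ptrace {ρ : Matrix (A × A') (A × A') ℂ} (hρ : ρ.PosSemidef) :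
    (ptrace ρ).PosSemidef := by
  rw [ptrace_eq_sum_submatrix]
  exact posSemidef_sum _ fun x _ => hρ.submatrix _

theorem ptrace_mono {ρ σ : Matrix (A × A') (A × A') ℂ} (h : ρ ≤ σ) :
    ptrace ρ ≤ ptrace σ := by
  rw [le_iff, ← ptrace_sub]
  exact (le_iff.mp h).ptrace

theorem iSup_eigenvalues_ptrace_le [Fintype A] [DecidableEq A] [DecidableEq A']
    {ρ : Matrix (A × A') (A × A') ℂ} (hρ : ρ.PosSemidef) (hA : (ptrace ρ).IsHermitian) :
    ⨆ i, hA.eigenvalues i ≤ Fintype.card A' * ⨆ i, hρ.1.eigenvalues i := by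
  have hρ_le : ρ ≤ algebraMap ℝ _ (⨆ i, hρ.1.eigenvalues i) :=
    (hρ.1.le_algebraMap_iff_eigenvalues_le _).mpr hρ.1.eigenvalues_le_iSup
  have hA_le := ptrace_mono hρ_le
  rw [ptrace_algebraMap, hA.le_algebraMap_iff_eigenvalues_le] at hA_le
  exact Real.iSup_le hA_le
    (mul_nonneg (Nat.cast_nonneg _) (Real.iSup_nonneg hρ.eigenvalues_nonneg))

end PartialTrace

theorem Real.logb_le_logb_add_logb_of_le_mul {b x c y : ℝ} (hb : 1 < b) (hx : 0 < x)
    (hc : 0 < c) (hy : 0 < y) (h : x ≤ c * y) :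
    Real.logb b x ≤ Real.logb b c + Real.logb b y := by
  rw [← Real.logb_mul hc.ne' hy.ne']
  exact Real.logb_le_logb_of_le hb hx h

/-- If ρ_{AA'} is a density operator on A ⊗ A' with dim A' = d and
ρ_A = Tr_{A'} ρ_{AA'}, then `Δ(ρ_A) ≤ Δ(ρ_{AA'}) + 2 log₂ d`, where
`Δ(ρ) = S₀(ρ) - S_∞(ρ) = log₂ (rank ρ) + log₂ ‖ρ‖_∞`. -/
theorem delta_change_under_partial_trace {a d : ℕ}
    (ρ : Matrix (Fin a × Fin d) (Fin a × Fin d) ℂ)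
    (hρ : ρ.PosSemidef) (htr : ρ.trace = 1)
    (hA : (ptrace ρ).IsHermitian) :
    Real.logb 2 ((ptrace ρ).rank : ℝ) + Real.logb 2 (⨆ i, hA.eigenvalues i) ≤
      (Real.logb 2 (ρ.rank : ℝ) + Real.logb 2 (⨆ i, hρ.1.eigenvalues i)) +
        2 * Real.logb 2 (d : ℝ) := by
  have htrρ : 0 < RCLike.re ρ.trace := by simp [htr]
  have htrA : 0 < RCLike.re (ptrace ρ).trace := by rwa [trace_ptrace]
  have hrank : (ptrace ρ).rank ≤ d * ρ.rank := by simpa using rank_ptrace_le ρ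
  have hsup : ⨆ i, hA.eigenvalues i ≤ d * ⨆ i, hρ.1.eigenvalues i := by
    simpa using iSup_eigenvalues_ptrace_le hρ hA
  have hd : (0 : ℝ) < d := by
    exact_mod_cast pos_of_mul_pos_left ((hA.rank_pos htrA).trans_le hrank) (Nat.zero_le _)
  have hlog_rank := Real.logb_le_logb_add_logb_of_le_mul one_lt_two
    (Nat.cast_pos.mpr (hA.rank_pos htrA)) hd (Nat.cast_pos.mpr (hρ.1.rank_pos htrρ))
    (by exact_mod_cast hrank)
  have hlog_sup := Real.logb_le_logb_add_logb_of_le_mul one_lt_two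
    (hA.iSup_eigenvalues_pos htrA) hd (hρ.1.iSup_eigenvalues_pos htrρ) hsup
  linarith
end

section
/- For any two probability vectors t and w and 0 ≤ ε < 1: Δ_ε(t ⊗ w) ≥ Δ_{√ε}(t) + log(1-√ε), where t ⊗ w is the product distribution (t_i w_k) and Δ_δ(p) = log min{|J|·max_{j∈J} p_j : Σ_{j∈J} p_j ≥ 1-δ}. -/
/-- `Δ_ε(r) = log₂ min { |J| · max_{j∈J} r_j : Σ_{j∈J} r_j ≥ 1-ε }`. -/
noncomputable def Delta {ι : Type*} [Fintype ι] (r : ι → ℝ) (ε : ℝ) : ℝ :=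
  sInf { x | ∃ J : Finset ι, 1 - ε ≤ ∑ j ∈ J, r j ∧
    x = Real.logb 2 ((J.card : ℝ) * (⨆ j ∈ (J : Set ι), r j)) }

/-!
Split a set `J` of `t ⊗ w`-mass at least `1 - ε` into its fibers `J_k = {i | (i, k) ∈ J}`.
The missing masses `1 - t(J_k)` have `w`-average at most `ε = δ²`, so by Markov the columns
with `t(J_k) ≥ 1 - δ` carry `w`-weight at least `1 - δ`. Since `∑ₖ |J_k| = |J|`, averaging
yields such a column with `|J_k| (1 - δ) ≤ w_k |J|`, and `max_{J_k} t ≤ max_J (t ⊗ w) / w_k`;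
so `J_k` witnesses `Δ_δ(t) ≤ log (|J| max_J (t ⊗ w)) - log (1 - δ)`.
-/

open Finset

section FinsetSup

variable {ι : Type*} (f : ι → ℝ) (s : Finset ι)

theorem le_biSup_finset {j : ι} (hj : j ∈ s) : f j ≤ ⨆ i ∈ (s : Set ι), f i :=
  le_ciSup₂ (f := fun i (_ : i ∈ (s : Set ι)) => f i)
    ((s.finite_toSet.image f).bddAbove.mono (by
      rintro _ ⟨_, ⟨i, rfl⟩, hi, rfl⟩
      exact ⟨i, hi, rfl⟩)) j hj

theorem biSup_finset_le {a : ℝ} (ha : 0 ≤ a) (h : ∀ i ∈ s, f i ≤ a) :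
    ⨆ i ∈ (s : Set ι), f i ≤ a :=
  Real.iSup_le (fun i => Real.iSup_le (fun hi => h i hi) ha) ha

theorem biSup_finset_nonneg {f : ι → ℝ} (hf : ∀ i, 0 ≤ f i) : 0 ≤ ⨆ i ∈ (s : Set ι), f i :=
  Real.iSup_nonneg fun i => Real.iSup_nonneg fun _ => hf i

theorem sum_le_card_mul_biSup : ∑ i ∈ s, f i ≤ s.card * ⨆ i ∈ (s : Set ι), f i := by
  simpa only [nsmul_eq_mul] using sum_le_card_nsmul s f _ fun i hi => le_biSup_finset f s hi

end FinsetSup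

section Delta

variable {ι : Type*} [Fintype ι] {r : ι → ℝ} {ε : ℝ}

theorem Delta_le_logb (hε : ε < 1) {J : Finset ι} (hJ : 1 - ε ≤ ∑ j ∈ J, r j) :
    Delta r ε ≤ Real.logb 2 (J.card * ⨆ j ∈ (J : Set ι), r j) := by
  refine csInf_le ⟨Real.logb 2 (1 - ε), ?_⟩ ⟨J, hJ, rfl⟩
  rintro _ ⟨I, hI, rfl⟩
  exact Real.logb_le_logb_of_le one_lt_two (sub_pos.2 hε) (hI.trans (sum_le_card_mul_biSup r I))

theorem le_Delta {c : ℝ} (hr : 1 - ε ≤ ∑ j, r j)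
    (h : ∀ J : Finset ι, 1 - ε ≤ ∑ j ∈ J, r j →
      c ≤ Real.logb 2 (J.card * ⨆ j ∈ (J : Set ι), r j)) :
    c ≤ Delta r ε :=
  le_csInf ⟨_, univ, hr, rfl⟩ (by rintro _ ⟨J, hJ, rfl⟩; exact h J hJ)

end Delta

section Averaging

variable {κ : Type*} {s : Finset κ} {w : κ → ℝ}

theorem sum_filter_lt_le_of_sum_mul_le_sq {g : κ → ℝ} {δ : ℝ}
    (hw : ∀ k ∈ s, 0 ≤ w k) (hg : ∀ k ∈ s, 0 ≤ g k) (hδ : 0 ≤ δ)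
    (h : ∑ k ∈ s, w k * g k ≤ δ ^ 2) : ∑ k ∈ s with δ < g k, w k ≤ δ := by
  have hwg : ∀ k ∈ s, 0 ≤ w k * g k := fun k hk => mul_nonneg (hw k hk) (hg k hk)
  rcases hδ.eq_or_lt with rfl | hδ
  · have hzero := (sum_eq_zero_iff_of_nonneg hwg).1 (le_antisymm (by simpa using h) (sum_nonneg hwg))
    refine (sum_eq_zero fun k hk => ?_).le
    rw [mem_filter] at hk
    exact (mul_eq_zero.1 (hzero k hk.1)).resolve_right hk.2.ne'
  · have hmarkov : δ * ∑ k ∈ s with δ < g k, w k ≤ δ * δ := calc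
        δ * ∑ k ∈ s with δ < g k, w k ≤ ∑ k ∈ s with δ < g k, w k * g k := by
          rw [mul_sum]
          refine sum_le_sum fun k hk => ?_
          rw [mem_filter] at hk
          nlinarith [hw k hk.1]
        _ ≤ ∑ k ∈ s, w k * g k := sum_le_sum_of_subset_of_nonneg (filter_subset _ _)
          fun k hk _ => hwg k hk
        _ ≤ δ * δ := by rwa [← sq]
    exact le_of_mul_le_mul_left hmarkov hδ

theorem exists_pos_mul_le_of_le_sum {c : κ → ℝ} {a N : ℝ}
    (ha : 0 < a) (hw : ∀ k ∈ s, 0 ≤ w k) (hc : ∀ k ∈ s, 0 ≤ c k)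
    (hws : a ≤ ∑ k ∈ s, w k) (hcs : ∑ k ∈ s, c k ≤ N) :
    ∃ k ∈ s, 0 < w k ∧ c k * a ≤ w k * N := by
  have hsum : ∑ k ∈ s with 0 < w k, w k = ∑ k ∈ s, w k :=
    sum_filter_of_ne fun k hk h => (hw k hk).lt_of_ne' h
  have hN : 0 ≤ N := (sum_nonneg hc).trans hcs
  obtain ⟨k, hk, hle⟩ := exists_le_of_sum_le (nonempty_of_sum_ne_zero (f := w) (by linarith)) <| calc
    ∑ k ∈ s with 0 < w k, c k * a ≤ ∑ k ∈ s, c k * a :=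
        sum_le_sum_of_subset_of_nonneg (filter_subset _ _) fun k hk _ => mul_nonneg (hc k hk) ha.le
    _ = (∑ k ∈ s, c k) * a := (sum_mul _ _ _).symm
    _ ≤ (∑ k ∈ s with 0 < w k, w k) * N := by rw [hsum]; nlinarith
    _ = ∑ k ∈ s with 0 < w k, w k * N := sum_mul _ _ _
  rw [mem_filter] at hk
  exact ⟨k, hk.1, hk.2, hle⟩

end Averaging

section Fiber

variable {ι κ : Type*}

noncomputable def fiber (J : Finset (ι × κ)) (k : κ) : Finset ι :=
  J.preimage (·, k) (Prod.mk_left_injective k).injOn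

@[simp]
theorem mem_fiber {J : Finset (ι × κ)} {k : κ} {i : ι} : i ∈ fiber J k ↔ (i, k) ∈ J :=
  mem_preimage

variable [Fintype κ]

theorem sum_eq_sum_sum_fiber {M : Type*} [AddCommMonoid M] (J : Finset (ι × κ)) (F : ι → κ → M) :
    ∑ p ∈ J, F p.1 p.2 = ∑ k, ∑ i ∈ fiber J k, F i k :=
  sum_finset_product_right' J univ (fiber J) (by simp)

theorem sum_card_fiber (J : Finset (ι × κ)) : ∑ k, (fiber J k).card = J.card := by
  simp only [card_eq_sum_ones]
  exact (sum_eq_sum_sum_fiber J fun _ _ => 1).symm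

end Fiber

theorem card_mul_biSup_fiber_le {ι κ : Type*} {t : ι → ℝ} {w : κ → ℝ} (ht : ∀ i, 0 ≤ t i)
    (hw : ∀ k, 0 ≤ w k) {J : Finset (ι × κ)} {k : κ} {a : ℝ} (hwk : 0 < w k)
    (hcard : (fiber J k).card * a ≤ w k * J.card) :
    (fiber J k).card * (⨆ i ∈ (fiber J k : Set ι), t i) * a ≤
      J.card * ⨆ p ∈ (J : Set (ι × κ)), t p.1 * w p.2 := by
  set M := ⨆ p ∈ (J : Set (ι × κ)), t p.1 * w p.2
  have hM : 0 ≤ M := biSup_finset_nonneg J fun p => mul_nonneg (ht p.1) (hw p.2)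
  have hsup : ⨆ i ∈ (fiber J k : Set ι), t i ≤ M / w k :=
    biSup_finset_le t _ (div_nonneg hM hwk.le) fun i hi =>
      (le_div_iff₀ hwk).2 (le_biSup_finset (fun p : ι × κ => t p.1 * w p.2) J (mem_fiber.1 hi))
  calc (fiber J k).card * (⨆ i ∈ (fiber J k : Set ι), t i) * a
      = ((fiber J k).card * a) * ⨆ i ∈ (fiber J k : Set ι), t i := by ring
    _ ≤ (w k * J.card) * (M / w k) :=
        mul_le_mul hcard hsup (biSup_finset_nonneg _ ht) (by positivity)
    _ = J.card * M := by field_simp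

theorem exists_heavy_fiber {ι κ : Type*} [Fintype ι] [Fintype κ] {t : ι → ℝ} {w : κ → ℝ}
    (ht : ∀ i, 0 ≤ t i) (hw : ∀ k, 0 ≤ w k) (htsum : ∑ i, t i = 1) (hwsum : ∑ k, w k = 1)
    {δ : ℝ} (hδ0 : 0 ≤ δ) (hδ1 : δ < 1) {J : Finset (ι × κ)}
    (hJ : 1 - δ ^ 2 ≤ ∑ p ∈ J, t p.1 * w p.2) :
    ∃ k, 0 < w k ∧ 1 - δ ≤ ∑ i ∈ fiber J k, t i ∧
      (fiber J k).card * (1 - δ) ≤ w k * J.card := by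
  set f : κ → ℝ := fun k => ∑ i ∈ fiber J k, t i
  have hf1 : ∀ k, f k ≤ 1 := fun k => htsum ▸ sum_le_univ_sum_of_nonneg ht
  have hmissing : ∑ k, w k * (1 - f k) ≤ δ ^ 2 := by
    have hJf : ∑ p ∈ J, t p.1 * w p.2 = ∑ k, w k * f k := by
      rw [sum_eq_sum_sum_fiber J fun i k => t i * w k]
      simp only [f, mul_sum, mul_comm]
    simp only [mul_sub, mul_one, sum_sub_distrib, hwsum]
    linarith
  have hbad := sum_filter_lt_le_of_sum_mul_le_sq (s := univ) (fun k _ => hw k)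
    (fun k _ => sub_nonneg.2 (hf1 k)) hδ0 hmissing
  have hgood : 1 - δ ≤ ∑ k with ¬ δ < 1 - f k, w k := by
    have := sum_filter_add_sum_filter_not univ (fun k => δ < 1 - f k) w
    linarith
  have hcards : ∑ k with ¬ δ < 1 - f k, ((fiber J k).card : ℝ) ≤ J.card := calc
    _ ≤ ∑ k, ((fiber J k).card : ℝ) := sum_le_univ_sum_of_nonneg fun _ => Nat.cast_nonneg _
    _ = J.card := by exact_mod_cast sum_card_fiber J
  obtain ⟨k, hk, hwk, hcard⟩ := exists_pos_mul_le_of_le_sum (sub_pos.2 hδ1) (fun k _ => hw k)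
    (fun k _ => Nat.cast_nonneg _) hgood hcards
  rw [mem_filter, not_lt] at hk
  exact ⟨k, hwk, by linarith [hk.2], hcard⟩

/-- Lemma 2: For any two probability vectors t, w and 0 ≤ ε < 1:
`Δ_ε(t ⊗ w) ≥ Δ_{√ε}(t) + log₂(1 - √ε)`, where `t ⊗ w` is the product distribution
with entries `t_i w_k`. -/
theorem delta_eps_product_bound {ι κ : Type*} [Fintype ι] [Fintype κ]
    (t : ι → ℝ) (w : κ → ℝ)
    (ht : ∀ i, 0 ≤ t i) (hw : ∀ k, 0 ≤ w k)
    (htsum : ∑ i, t i = 1) (hwsum : ∑ k, w k = 1)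
    (ε : ℝ) (hε0 : 0 ≤ ε) (hε1 : ε < 1) :
    Delta (fun p : ι × κ => t p.1 * w p.2) ε ≥
      Delta t (Real.sqrt ε) + Real.logb 2 (1 - Real.sqrt ε) := by
  set δ := Real.sqrt ε
  have hδ0 : 0 ≤ δ := Real.sqrt_nonneg ε
  have hδ1 : δ < 1 := (Real.sqrt_lt' one_pos).2 (by rwa [one_pow])
  have h1δ : 0 < 1 - δ := sub_pos.2 hδ1
  have htotal : ∑ p : ι × κ, t p.1 * w p.2 = 1 := by
    rw [Fintype.sum_prod_type, ← Fintype.sum_mul_sum, htsum, hwsum, one_mul]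
  refine le_Delta (by linarith) fun J hJ => ?_
  obtain ⟨k, hwk, hfiber, hcard⟩ :=
    exists_heavy_fiber ht hw htsum hwsum hδ0 hδ1 (by rwa [Real.sq_sqrt hε0])
  set I := fiber J k
  have hI : 0 < I.card * ⨆ i ∈ (I : Set ι), t i :=
    h1δ.trans_le (hfiber.trans (sum_le_card_mul_biSup t I))
  calc Delta t δ + Real.logb 2 (1 - δ)
      ≤ Real.logb 2 (I.card * ⨆ i ∈ (I : Set ι), t i) + Real.logb 2 (1 - δ) := by
        gcongr; exact Delta_le_logb hδ1 hfiber
    _ = Real.logb 2 (I.card * (⨆ i ∈ (I : Set ι), t i) * (1 - δ)) :=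
        (Real.logb_mul hI.ne' h1δ.ne').symm
    _ ≤ _ := Real.logb_le_logb_of_le one_lt_two (mul_pos hI h1δ)
        (card_mul_biSup_fiber_le ht hw hwk hcard)
end

section
/- Quasi-subadditivity of Δ_ε: for any two probability vectors t and w and 0 ≤ ε < 1/2, Δ_{2ε}(t ⊗ w) ≤ Δ_ε(t) + Δ_ε(w), where Δ_δ(p) = log min{|J|·max_{j∈J} p_j : Σ_{j∈J} p_j ≥ 1-δ}. -/
lemma biSup_eq_sup' {ι : Type*} [Fintype ι] (r : ι → ℝ) (hr : ∀ i, 0 ≤ r i)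
    (J : Finset ι) (hJ : J.Nonempty) :
    (⨆ j ∈ (J : Set ι), r j) = J.sup' hJ r := by
  have : Nonempty ι := ⟨hJ.choose⟩
  apply le_antisymm
  · apply ciSup_le
    intro j
    by_cases h : j ∈ J
    · rw [ciSup_pos (Finset.mem_coe.mpr h)]
      exact Finset.le_sup' r h
    · simp only [Finset.mem_coe, h]
      rw [Real.iSup_of_isEmpty]
      exact Finset.le_sup'_of_le r hJ.choose_spec (hr _)
  · apply Finset.sup'_le
    intro j hj
    refine le_ciSup_of_le (Set.Finite.bddAbove (Set.finite_range _)) j ?_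
    rw [ciSup_pos (Finset.mem_coe.mpr hj)]

lemma sup'_prod {ι κ : Type*} (t : ι → ℝ) (w : κ → ℝ)
    (ht : ∀ i, 0 ≤ t i) (hw : ∀ k, 0 ≤ w k)
    (J₁ : Finset ι) (h₁ : J₁.Nonempty) (J₂ : Finset κ) (h₂ : J₂.Nonempty) :
    (J₁ ×ˢ J₂).sup' (h₁.product h₂) (fun p => t p.1 * w p.2)
      = J₁.sup' h₁ t * J₂.sup' h₂ w := by
  apply le_antisymm
  · apply Finset.sup'_le
    rintro ⟨i, k⟩ hp
    rw [Finset.mem_product] at hp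
    exact mul_le_mul (Finset.le_sup' t hp.1) (Finset.le_sup' w hp.2) (hw k)
      (le_trans (ht _) (Finset.le_sup' t hp.1))
  · obtain ⟨i₀, hi₀, hei⟩ := Finset.exists_mem_eq_sup' h₁ t
    obtain ⟨k₀, hk₀, hek⟩ := Finset.exists_mem_eq_sup' h₂ w
    rw [hei, hek]
    have hm : (i₀, k₀) ∈ J₁ ×ˢ J₂ := Finset.mem_product.mpr ⟨hi₀, hk₀⟩
    exact Finset.le_sup' (fun p : ι × κ => t p.1 * w p.2) hm

lemma J_nonempty {ι : Type*} [Fintype ι] (r : ι → ℝ) (δ : ℝ) (hδ : δ < 1)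
    (J : Finset ι) (hJ : 1 - δ ≤ ∑ j ∈ J, r j) : J.Nonempty := by
  rcases J.eq_empty_or_nonempty with h | h
  · exfalso; rw [h, Finset.sum_empty] at hJ; linarith
  · exact h

lemma card_sup_pos {ι : Type*} [Fintype ι] (r : ι → ℝ)
    (δ : ℝ) (J : Finset ι) (hJne : J.Nonempty)
    (hJ : 1 - δ ≤ ∑ j ∈ J, r j) :
    1 - δ ≤ (J.card : ℝ) * J.sup' hJne r := by
  calc 1 - δ ≤ ∑ j ∈ J, r j := hJ
    _ ≤ ∑ _j ∈ J, J.sup' hJne r := Finset.sum_le_sum fun j hj => Finset.le_sup' r hj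
    _ = (J.card : ℝ) * J.sup' hJne r := by rw [Finset.sum_const, nsmul_eq_mul]

lemma delta_bddBelow {ι : Type*} [Fintype ι] (r : ι → ℝ) (hr : ∀ i, 0 ≤ r i)
    (δ : ℝ) (hδ : δ < 1) :
    ∀ x ∈ { x | ∃ J : Finset ι, 1 - δ ≤ ∑ j ∈ J, r j ∧
      x = Real.logb 2 ((J.card : ℝ) * (⨆ j ∈ (J : Set ι), r j)) },
      Real.logb 2 (1 - δ) ≤ x := by
  rintro x ⟨J, hJ, rfl⟩
  have hne : J.Nonempty := J_nonempty r δ hδ J hJ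
  rw [biSup_eq_sup' r hr J hne]
  exact Real.logb_le_logb_of_le one_lt_two (by linarith) (card_sup_pos r δ J hne hJ)

/-- Quasi-subadditivity of Δ_ε: for probability vectors t, w and
0 ≤ ε < 1/2: `Δ_{2ε}(t ⊗ w) ≤ Δ_ε(t) + Δ_ε(w)`. -/
theorem delta_eps_quasi_subadditive {ι κ : Type*} [Fintype ι] [Fintype κ]
    (t : ι → ℝ) (w : κ → ℝ)
    (ht : ∀ i, 0 ≤ t i) (hw : ∀ k, 0 ≤ w k)
    (htsum : ∑ i, t i = 1) (hwsum : ∑ k, w k = 1)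
    (ε : ℝ) (hε0 : 0 ≤ ε) (hε1 : ε < 1 / 2) :
    Delta (fun p : ι × κ => t p.1 * w p.2) (2 * ε) ≤ Delta t ε + Delta w ε := by
  classical
  have hδ : ε < 1 := by linarith
  have h2δ : 2 * ε < 1 := by linarith
  have hfpos : ∀ p : ι × κ, 0 ≤ t p.1 * w p.2 := fun p => mul_nonneg (ht _) (hw _)
  unfold Delta
  set S₁ := { x | ∃ J : Finset ι, 1 - ε ≤ ∑ j ∈ J, t j ∧
    x = Real.logb 2 ((J.card : ℝ) * (⨆ j ∈ (J : Set ι), t j)) } with hS₁def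
  set S₂ := { x | ∃ J : Finset κ, 1 - ε ≤ ∑ j ∈ J, w j ∧
    x = Real.logb 2 ((J.card : ℝ) * (⨆ j ∈ (J : Set κ), w j)) } with hS₂def
  set Sp := { x | ∃ J : Finset (ι × κ), 1 - 2 * ε ≤ ∑ j ∈ J, t j.1 * w j.2 ∧
    x = Real.logb 2 ((J.card : ℝ) * (⨆ j ∈ (J : Set (ι × κ)), t j.1 * w j.2)) } with hSpdef
  have hS₁ne : S₁.Nonempty :=
    ⟨Real.logb 2 (((Finset.univ : Finset ι).card : ℝ) *
        ⨆ j ∈ ((Finset.univ : Finset ι) : Set ι), t j),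
      ⟨Finset.univ, by rw [htsum]; linarith, rfl⟩⟩
  have hS₂ne : S₂.Nonempty :=
    ⟨Real.logb 2 (((Finset.univ : Finset κ).card : ℝ) *
        ⨆ j ∈ ((Finset.univ : Finset κ) : Set κ), w j),
      ⟨Finset.univ, by rw [hwsum]; linarith, rfl⟩⟩
  have hSpbdd : BddBelow Sp := ⟨_, fun x hx => delta_bddBelow _ hfpos (2 * ε) h2δ x hx⟩
  have key : ∀ a ∈ S₁, ∀ b ∈ S₂, sInf Sp ≤ a + b := by
    rintro a ⟨J₁, h1sum, rfl⟩ b ⟨J₂, h2sum, rfl⟩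
    have hJ₁ : J₁.Nonempty := J_nonempty t ε hδ J₁ h1sum
    have hJ₂ : J₂.Nonempty := J_nonempty w ε hδ J₂ h2sum
    rw [biSup_eq_sup' t ht J₁ hJ₁, biSup_eq_sup' w hw J₂ hJ₂]
    have hp₁ : (0:ℝ) < (J₁.card : ℝ) * J₁.sup' hJ₁ t :=
      lt_of_lt_of_le (by linarith) (card_sup_pos t ε J₁ hJ₁ h1sum)
    have hp₂ : (0:ℝ) < (J₂.card : ℝ) * J₂.sup' hJ₂ w :=
      lt_of_lt_of_le (by linarith) (card_sup_pos w ε J₂ hJ₂ h2sum)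
    apply csInf_le hSpbdd
    refine ⟨J₁ ×ˢ J₂, ?_, ?_⟩
    · rw [Finset.sum_product, ← Finset.sum_mul_sum]
      nlinarith [mul_nonneg (by linarith : (0:ℝ) ≤ (∑ j ∈ J₁, t j) - (1 - ε))
        (by linarith : (0:ℝ) ≤ (∑ j ∈ J₂, w j) - (1 - ε))]
    · rw [biSup_eq_sup' _ hfpos (J₁ ×ˢ J₂) (hJ₁.product hJ₂),
        sup'_prod t w ht hw J₁ hJ₁ J₂ hJ₂,
        show ((J₁ ×ˢ J₂).card : ℝ) * (J₁.sup' hJ₁ t * J₂.sup' hJ₂ w)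
            = ((J₁.card : ℝ) * J₁.sup' hJ₁ t) * ((J₂.card : ℝ) * J₂.sup' hJ₂ w) by
          rw [Finset.card_product]; push_cast; ring,
        Real.logb_mul hp₁.ne' hp₂.ne']
  have h1 : ∀ a ∈ S₁, sInf Sp - sInf S₂ ≤ a := by
    intro a ha
    have h2 : sInf Sp - a ≤ sInf S₂ :=
      le_csInf hS₂ne (fun b hb => by linarith [key a ha b hb])
    linarith
  have h3 : sInf Sp - sInf S₂ ≤ sInf S₁ := le_csInf hS₁ne h1
  linarith
end
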